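/- arXiv:2603.02636 — 4 statements merged into one kernel-verified Lean document; each statement's English description precedes it below -/
import Mathlib

section
/- Let f : ℝ × ℝ → ℝ be defined by f(x,y) = x/y if y > 0 and f(x,y) = 0 if y = 0. Then for all real numbers a ≥ 0, b > 0, and x, y with 0 ≤ x ≤ y, we have a/b − f(x,y) ≤ (a − x)/b + (x/b²)·(y − b). -/
/-- The "safe ratio" inequality: with `f (x, y) = x / y` when `y > 0` and `0` when `y = 0`,
for all `a ≥ 0`, `b > 0` and `0 ≤ x ≤ y` we have
`a/b − f(x,y) ≤ (a − x)/b + (x/b²)·(y − b)`. -/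
theorem stmt0 (f : ℝ × ℝ → ℝ)
    (hf : ∀ x y : ℝ, f (x, y) = if 0 < y then x / y else 0)
    (a b x y : ℝ) (ha : 0 ≤ a) (hb : 0 < b) (hx : 0 ≤ x) (hxy : x ≤ y) :
    a / b - f (x, y) ≤ (a - x) / b + x / b ^ 2 * (y - b) := by
  rw [hf]
  rcases lt_or_eq_of_le (hx.trans hxy) with hy | hy
  · rw [if_pos hy]
    have key : a / b - x / y - ((a - x) / b + x / b ^ 2 * (y - b)) = -(x * (y - b) ^ 2) / (b ^ 2 * y) := by
      field_simp
      ring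
    have hpos : -(x * (y - b) ^ 2) / (b ^ 2 * y) ≤ 0 := by
      apply div_nonpos_of_nonpos_of_nonneg
      · nlinarith [mul_nonneg hx (sq_nonneg (y - b))]
      · positivity
    linarith
  · rw [if_neg (by simp [← hy])]
    have hx0 : x = 0 := le_antisymm (hy ▸ hxy) hx
    simp [hx0]
end

section
/- Let X and Y be nonnegative real random variables on a probability space with 0 ≤ X ≤ Y almost surely and E[Y] > 0, and define f(x,y) = x/y if y > 0 and 0 if y = 0. Then E[f(X,Y)] ≥ E[X]/E[Y] − Cov[X,Y]/E[Y]², where Cov[X,Y] = E[XY] − E[X]E[Y]. -/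
open MeasureTheory

/-- First-order Taylor bound for the expectation of a ratio: if `0 ≤ X ≤ Y` a.s. and
`E[Y] > 0`, then `E[f(X,Y)] ≥ E[X]/E[Y] − Cov[X,Y]/E[Y]²`, where `f(x,y) = x/y` for `y > 0`
and `f(x,y) = 0` for `y = 0`, and `Cov[X,Y] = E[XY] − E[X]·E[Y]`. -/
theorem stmt1 {Ω : Type*} {mΩ : MeasurableSpace Ω} (μ : Measure Ω)
    [IsProbabilityMeasure μ]
    (f : ℝ → ℝ → ℝ) (hf : ∀ x y : ℝ, f x y = if 0 < y then x / y else 0)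
    (X Y : Ω → ℝ)
    (hXmeas : Measurable X) (hYmeas : Measurable Y)
    (hXint : Integrable X μ) (hYint : Integrable Y μ)
    (hXYint : Integrable (fun ω => X ω * Y ω) μ)
    (hae : ∀ᵐ ω ∂μ, 0 ≤ X ω ∧ X ω ≤ Y ω)
    (hEY : 0 < ∫ ω, Y ω ∂μ) :
    (∫ ω, X ω ∂μ) / (∫ ω, Y ω ∂μ)
        - ((∫ ω, X ω * Y ω ∂μ) - (∫ ω, X ω ∂μ) * (∫ ω, Y ω ∂μ)) / (∫ ω, Y ω ∂μ) ^ 2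
      ≤ ∫ ω, f (X ω) (Y ω) ∂μ := by
  set b := ∫ ω, Y ω ∂μ with hb
  have hbne : b ≠ 0 := ne_of_gt hEY
  -- measurability of f(X,Y)
  have hmeas : Measurable (fun ω => f (X ω) (Y ω)) := by
    simp only [hf]
    exact Measurable.ite (measurableSet_lt measurable_const hYmeas)
      (hXmeas.div hYmeas) measurable_const
  -- integrability of f(X,Y): bounded by 1
  have hfint : Integrable (fun ω => f (X ω) (Y ω)) μ := by
    refine Integrable.mono' (integrable_const (1 : ℝ)) hmeas.aestronglyMeasurable ?_
    filter_upwards [hae] with ω ⟨hx0, hxy⟩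
    rw [hf]
    split_ifs with hy
    · rw [Real.norm_eq_abs, abs_of_nonneg (div_nonneg hx0 hy.le)]
      exact div_le_one_of_le₀ hxy hy.le
    · simp
  -- pointwise lower bound: X*(2b - Y)/b^2 ≤ f(X,Y)
  have hg : Integrable (fun ω => X ω * (2 * b - Y ω) / b ^ 2) μ := by
    have : Integrable (fun ω => (X ω * (2 * b) - X ω * Y ω) / b ^ 2) μ :=
      ((hXint.mul_const (2 * b)).sub hXYint).div_const _
    simpa [mul_sub] using this
  have hmono : ∫ ω, X ω * (2 * b - Y ω) / b ^ 2 ∂μ ≤ ∫ ω, f (X ω) (Y ω) ∂μ := by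
    refine integral_mono_ae hg hfint ?_
    filter_upwards [hae] with ω ⟨hx0, hxy⟩
    rw [hf]
    split_ifs with hy
    · rw [div_le_div_iff₀ (by positivity) hy]
      nlinarith [mul_nonneg hx0 (sq_nonneg (b - Y ω))]
    · have hy0 : Y ω = 0 := le_antisymm (not_lt.mp hy) (hx0.trans hxy)
      have hx : X ω = 0 := le_antisymm (hy0 ▸ hxy) hx0
      simp [hx]
  -- compute the integral on the left
  have hcalc : ∫ ω, X ω * (2 * b - Y ω) / b ^ 2 ∂μ
      = (2 * b * (∫ ω, X ω ∂μ) - ∫ ω, X ω * Y ω ∂μ) / b ^ 2 := by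
    have : (fun ω => X ω * (2 * b - Y ω) / b ^ 2)
        = fun ω => (X ω * (2 * b) - X ω * Y ω) / b ^ 2 := by
      funext ω; ring
    rw [this, integral_div, integral_sub (hXint.mul_const _) hXYint,
      integral_mul_const]
    ring
  rw [hcalc] at hmono
  refine le_trans (le_of_eq ?_) hmono
  field_simp
  ring
end

section
/- Let X be a real random variable with E[X] = 0 and |X| ≤ D almost surely for some D ≥ 0. Then for every real λ with |λ|·D < 3, E[exp(λX)] ≤ exp( (λ²·Var[X]/2) / (1 − |λ|D/3) ). -/
/-!
The Taylor tail of the exponential is dominated by a geometric series: since `(n + 2)! ≥ 2 · 3ⁿ`,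
`u^(n+2) / (n+2)! ≤ (u² / 2) (|u| / 3)ⁿ`, so `exp u ≤ 1 + u + (u² / 2) / (1 - |u| / 3)` for `|u| < 3`.
For `|x| ≤ D` this gives `exp (λx) ≤ 1 + λx + c x²` with `c = (λ² / 2) / (1 - |λ| D / 3)`.
Taking expectations, the linear term vanishes because `X` is centered, so
`E[exp (λX)] ≤ 1 + c Var[X] ≤ exp (c Var[X])`.
-/

open MeasureTheory ProbabilityTheory

namespace Real

theorem pow_add_two_div_factorial_le (u : ℝ) (n : ℕ) :
    u ^ (n + 2) / (n + 2).factorial ≤ u ^ 2 / 2 * (|u| / 3) ^ n := by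
  have hfact : (2 * 3 ^ n : ℝ) ≤ (n + 2).factorial := by
    have := @Nat.factorial_mul_pow_le_factorial 2 n
    rw [add_comm 2 n] at this
    exact_mod_cast this
  calc u ^ (n + 2) / (n + 2).factorial ≤ |u| ^ (n + 2) / (2 * 3 ^ n) := by
        refine div_le_div₀ (by positivity) ?_ (by positivity) hfact
        exact (le_abs_self _).trans_eq (abs_pow u _)
    _ = u ^ 2 / 2 * (|u| / 3) ^ n := by
        rw [div_pow, pow_add, ← sq_abs u]
        ring

theorem exp_le_one_add_add_sq_div_one_sub {u : ℝ} (hu : |u| < 3) :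
    exp u ≤ 1 + u + u ^ 2 / 2 / (1 - |u| / 3) := by
  have hq : |u| / 3 < 1 := by linarith
  have hq0 : 0 ≤ |u| / 3 := by positivity
  have htail : exp u = 1 + u + ∑' n : ℕ, u ^ (n + 2) / (n + 2).factorial := by
    rw [exp_eq_exp_ℝ, NormedSpace.exp_eq_tsum_div]
    beta_reduce
    rw [← (summable_pow_div_factorial u).sum_add_tsum_nat_add 2]
    simp [Finset.sum_range_succ]
  calc exp u = 1 + u + ∑' n : ℕ, u ^ (n + 2) / (n + 2).factorial := htail
    _ ≤ 1 + u + ∑' n : ℕ, u ^ 2 / 2 * (|u| / 3) ^ n := by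
        gcongr 1 + u + ?_
        exact ((summable_nat_add_iff 2).2 (summable_pow_div_factorial u)).tsum_le_tsum
          (pow_add_two_div_factorial_le u) ((summable_geometric_of_lt_one hq0 hq).mul_left _)
    _ = 1 + u + u ^ 2 / 2 / (1 - |u| / 3) := by
        rw [tsum_mul_left, tsum_geometric_of_lt_one hq0 hq]
        ring

theorem exp_mul_le_of_abs_le {L x D : ℝ} (hx : |x| ≤ D) (hL : |L| * D < 3) :
    exp (L * x) ≤ 1 + L * x + L ^ 2 / 2 / (1 - |L| * D / 3) * x ^ 2 := by
  have hLx : |L * x| ≤ |L| * D := by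
    rw [abs_mul]
    gcongr
  have hden : 0 < 1 - |L| * D / 3 := by linarith
  calc exp (L * x) ≤ 1 + L * x + (L * x) ^ 2 / 2 / (1 - |L * x| / 3) :=
        exp_le_one_add_add_sq_div_one_sub (hLx.trans_lt hL)
    _ ≤ 1 + L * x + (L * x) ^ 2 / 2 / (1 - |L| * D / 3) := by
        gcongr
    _ = 1 + L * x + L ^ 2 / 2 / (1 - |L| * D / 3) * x ^ 2 := by ring

end Real

theorem stmt2_general {Ω : Type*} {mΩ : MeasurableSpace Ω} (μ : Measure Ω)
    [IsProbabilityMeasure μ]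
    (X : Ω → ℝ) (hXmeas : Measurable X)
    (D : ℝ)
    (hmean : ∫ ω, X ω ∂μ = 0)
    (hbdd : ∀ᵐ ω ∂μ, |X ω| ≤ D)
    (L : ℝ) (hL : |L| * D < 3) :
    ∫ ω, Real.exp (L * X ω) ∂μ ≤
      Real.exp (L ^ 2 * variance X μ / 2 / (1 - |L| * D / 3)) := by
  set c := L ^ 2 / 2 / (1 - |L| * D / 3)
  have hXmem : MemLp X ⊤ μ := memLp_top_of_bound hXmeas.aestronglyMeasurable D hbdd
  have hX : Integrable X μ := hXmem.integrable le_top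
  have hX2 : Integrable (fun ω => X ω ^ 2) μ := (hXmem.mono_exponent le_top).integrable_sq
  have hexp : Integrable (fun ω => Real.exp (L * X ω)) μ := by
    refine .of_bound (Real.measurable_exp.comp (hXmeas.const_mul L)).aestronglyMeasurable
      (Real.exp (|L| * D)) (hbdd.mono fun ω h => ?_)
    rw [Real.norm_eq_abs, Real.abs_exp, Real.exp_le_exp]
    calc L * X ω ≤ |L| * |X ω| := (le_abs_self _).trans_eq (abs_mul _ _)
      _ ≤ |L| * D := by gcongr
  calc ∫ ω, Real.exp (L * X ω) ∂μ ≤ ∫ ω, (1 + L * X ω + c * X ω ^ 2) ∂μ :=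
        integral_mono_ae hexp (by fun_prop)
          (hbdd.mono fun ω h => Real.exp_mul_le_of_abs_le h hL)
    _ = 1 + c * variance X μ := by
        rw [integral_add (by fun_prop) (hX2.const_mul c),
          integral_add (by fun_prop) (hX.const_mul L), integral_const_mul,
          integral_const_mul, hmean, variance_of_integral_eq_zero hXmeas.aemeasurable hmean]
        simp
    _ ≤ Real.exp (c * variance X μ) := by linarith [Real.add_one_le_exp (c * variance X μ)]
    _ = Real.exp (L ^ 2 * variance X μ / 2 / (1 - |L| * D / 3)) := by
        congr 1
        ring

/-- A centered random variable bounded by `D` satisfies the `(D, Var[X])`-Bernstein condition: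
for every `λ` with `|λ|·D < 3`, `E[exp(λX)] ≤ exp((λ²·Var[X]/2)/(1 − |λ|D/3))`. -/
theorem stmt2 {Ω : Type*} {mΩ : MeasurableSpace Ω} (μ : Measure Ω)
    [IsProbabilityMeasure μ]
    (X : Ω → ℝ) (hXmeas : Measurable X)
    (D : ℝ) (hD : 0 ≤ D)
    (hmean : ∫ ω, X ω ∂μ = 0)
    (hbdd : ∀ᵐ ω ∂μ, |X ω| ≤ D)
    (L : ℝ) (hL : |L| * D < 3) :
    ∫ ω, Real.exp (L * X ω) ∂μ ≤
      Real.exp (L ^ 2 * variance X μ / 2 / (1 - |L| * D / 3)) :=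
  stmt2_general (mΩ := mΩ) μ X hXmeas D hmean hbdd L hL
end

section
/- Let k ≥ 1 and α ∈ ℝ_{≥0}^k with β = Σᵢ αᵢ ∈ [0,1], γ = Σᵢ αᵢ², ‖α‖₃³ = Σᵢ αᵢ³, ‖α‖₄⁴ = Σᵢ αᵢ⁴, and set B = 2β(1−β) + γ. Then β²·γ·( 4(1−β)²γ + 4(1−β)·‖α‖₃³ + ‖α‖₄⁴ ) ≥ γ²·B². -/
/-- With `β = Σᵢ αᵢ ∈ [0,1]`, `γ = Σᵢ αᵢ²` and `B = 2β(1−β) + γ`, one has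
`β²·γ·(4(1−β)²γ + 4(1−β)·Σᵢαᵢ³ + Σᵢαᵢ⁴) ≥ γ²·B²`. -/
theorem stmt12 (k : ℕ) (α : Fin k → ℝ) (h0 : ∀ i, 0 ≤ α i)
    (β γ B : ℝ) (hβ : β = ∑ i, α i) (hβ0 : 0 ≤ β) (hβ1 : β ≤ 1)
    (hγ : γ = ∑ i, (α i) ^ 2) (hB : B = 2 * β * (1 - β) + γ) :
    γ ^ 2 * B ^ 2 ≤
      β ^ 2 * γ *
        (4 * (1 - β) ^ 2 * γ + 4 * (1 - β) * (∑ i, (α i) ^ 3) + ∑ i, (α i) ^ 4) := by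
  set S3 := ∑ i, (α i) ^ 3 with hS3
  set S4 := ∑ i, (α i) ^ 4 with hS4
  have hcs1 : γ ^ 2 ≤ β * S3 := by
    rw [hγ, hβ, hS3]
    exact Finset.sum_sq_le_sum_mul_sum_of_sq_eq_mul _ (fun i _ => h0 i)
      (fun i _ => pow_nonneg (h0 i) 3) (fun i _ => by ring)
  have hcs2 : S3 ^ 2 ≤ γ * S4 := by
    rw [hγ, hS3, hS4]
    have := Finset.sum_mul_sq_le_sq_mul_sq Finset.univ (fun i => α i) (fun i => (α i) ^ 2)
    rw [Finset.sum_congr rfl (fun i _ => by ring : ∀ i ∈ Finset.univ, α i * α i ^ 2 = α i ^ 3),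
      Finset.sum_congr rfl (fun i _ => by ring : ∀ i ∈ Finset.univ, (α i ^ 2) ^ 2 = α i ^ 4)] at this
    exact this
  have hγ0 : 0 ≤ γ := by
    rw [hγ]; exact Finset.sum_nonneg fun i _ => sq_nonneg _
  have hS30 : 0 ≤ S3 := Finset.sum_nonneg fun i _ => pow_nonneg (h0 i) 3
  have hS40 : 0 ≤ S4 := Finset.sum_nonneg fun i _ => pow_nonneg (h0 i) 4
  have h1β : 0 ≤ 1 - β := by linarith
  -- γ⁴ ≤ β²γ S4
  have h3 : γ ^ 4 ≤ β ^ 2 * γ * S4 := by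
    have a1 : γ ^ 2 * γ ^ 2 ≤ (β * S3) * (β * S3) :=
      mul_le_mul hcs1 hcs1 (sq_nonneg γ) (mul_nonneg hβ0 hS30)
    have a2 : β ^ 2 * S3 ^ 2 ≤ β ^ 2 * (γ * S4) :=
      mul_le_mul_of_nonneg_left hcs2 (sq_nonneg β)
    nlinarith [a1, a2]
  -- middle term
  have h2 : 4 * β * (1 - β) * γ ^ 3 ≤ β ^ 2 * γ * (4 * (1 - β) * S3) := by
    have : γ * γ ^ 2 ≤ γ * (β * S3) := mul_le_mul_of_nonneg_left hcs1 hγ0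
    nlinarith [mul_nonneg (mul_nonneg hβ0 h1β) hγ0]
  rw [hB]
  nlinarith [h2, h3]
end
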